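/- The matrix A₁ + A₂, where A₁ and A₂ are the explicit 9×9 symmetric integer matrices from the determinantal representation of 8·q·h₄, is positive definite; moreover all its eigenvalues exceed 1/2. -/

import Mathlib

open MvPolynomial Polynomial Matrix

noncomputable def univPoly {n : ℕ} (h : MvPolynomial (Fin n) ℝ) (e v : Fin n → ℝ) : Polynomial ℝ :=
  MvPolynomial.aeval (fun i => Polynomial.C (v i) + Polynomial.C (e i) * Polynomial.X) h

def RealRooted (p : Polynomial ℝ) : Prop :=
  ∀ z : ℂ, (p.map (algebraMap ℝ ℂ)).IsRoot z → z.im = 0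

def Hyperbolic {n : ℕ} (h : MvPolynomial (Fin n) ℝ) (e : Fin n → ℝ) : Prop :=
  MvPolynomial.eval e h ≠ 0 ∧ ∀ v : Fin n → ℝ, RealRooted (univPoly h e v)

def hypCone {n : ℕ} (h : MvPolynomial (Fin n) ℝ) (e : Fin n → ℝ) : Set (Fin n → ℝ) :=
  {v | ∀ t : ℝ, (univPoly h e v).IsRoot t → t ≤ 0}

def matA1 : Matrix (Fin 9) (Fin 9) ℝ :=
  !![0, 0, 0, 0, 0, 0, 0, 0, 0;
     0, 2, 4, 4, 2, 3, 0, 3, 0;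
     0, 4, 15, 10, 4, 9, 0, 12, 0;
     0, 4, 10, 15, 4, 12, 0, 7, 0;
     0, 2, 4, 4, 8, 4, 0, 4, 0;
     0, 3, 9, 12, 4, 12, 0, 8, 0;
     0, 0, 0, 0, 0, 0, 0, 0, 0;
     0, 3, 12, 7, 4, 8, 0, 12, 0;
     0, 0, 0, 0, 0, 0, 0, 0, 0]

def matA2 : Matrix (Fin 9) (Fin 9) ℝ :=
  !![2, 0, 4, 4, 0, 0, 3, 0, 3;
     0, 0, 0, 0, 0, 0, 0, 0, 0;
     4, 0, 15, 12, 4, 0, 9, 0, 12;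
     4, 0, 12, 15, 4, 0, 12, 0, 9;
     0, 0, 4, 4, 8, 0, 4, 0, 4;
     0, 0, 0, 0, 0, 0, 0, 0, 0;
     3, 0, 9, 12, 4, 0, 12, 0, 8;
     0, 0, 0, 0, 0, 0, 0, 0, 0;
     3, 0, 12, 9, 4, 0, 8, 0, 12]

def matA3 : Matrix (Fin 9) (Fin 9) ℝ :=
  !![5, 4, 5, 13, 0, 3, 4, 0, 0;
     4, 5, 5, 13, 0, 4, 3, 0, 0;
     5, 5, 8, 16, 0, 4, 4, 0, 0;
     13, 13, 16, 66, 0, 24, 24, 0, 0;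
     0, 0, 0, 0, 0, 0, 0, 0, 0;
     3, 4, 4, 24, 0, 12, 8, 0, 0;
     4, 3, 4, 24, 0, 8, 12, 0, 0;
     0, 0, 0, 0, 0, 0, 0, 0, 0;
     0, 0, 0, 0, 0, 0, 0, 0, 0]

def matA4 : Matrix (Fin 9) (Fin 9) ℝ :=
  !![5, 4, 13, 5, 0, 0, 0, 5, 4;
     4, 5, 11, 5, 0, 0, 0, 4, 3;
     13, 11, 62, 14, 0, 0, 0, 24, 24;
     5, 5, 14, 8, 0, 0, 0, 4, 4;
     0, 0, 0, 0, 0, 0, 0, 0, 0;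
     0, 0, 0, 0, 0, 0, 0, 0, 0;
     0, 0, 0, 0, 0, 0, 0, 0, 0;
     5, 4, 24, 4, 0, 0, 0, 12, 8;
     4, 3, 24, 4, 0, 0, 0, 8, 12]

/-!
Gaussian elimination on `A₁ + A₂ - ½ I` runs through with positive pivots: this matrix equals
`Lᵀ D L` with `L` unit upper triangular and `D` a positive diagonal matrix, both rational, so it
is positive definite. Hence `A₁ + A₂` is positive definite, and `vᵀ (A₁ + A₂ - ½ I) v > 0` for an
eigenvector `v` shows that every eigenvalue exceeds `½`.
-/

namespace Matrix

variable {n : Type*} [DecidableEq n]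

theorem PosDef.of_sub_smul_one {A : Matrix n n ℝ} {c : ℝ} (h : (A - c • 1).PosDef)
    (hc : 0 ≤ c) : A.PosDef := by
  simpa using h.add_posSemidef (PosSemidef.one.smul hc)

theorem PosDef.lt_of_hasEigenvalue [Fintype n] {A : Matrix n n ℝ} {c μ : ℝ}
    (h : (A - c • 1).PosDef) (hμ : Module.End.HasEigenvalue (toLin' A) μ) : c < μ := by
  obtain ⟨v, hv⟩ := hμ.exists_hasEigenvector
  have hAv : A *ᵥ v = μ • v := by simpa only [toLin'_apply] using hv.apply_eq_smul
  have hpos := h.dotProduct_mulVec_pos hv.2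
  rw [sub_mulVec, hAv, smul_mulVec, one_mulVec, ← sub_smul, dotProduct_smul, smul_eq_mul]
    at hpos
  exact sub_pos.mp (pos_of_mul_pos_left hpos (dotProduct_star_self_nonneg v))

theorem posDef_transpose_mul_diagonal_mul [Fintype n] [LinearOrder n] {L : Matrix n n ℝ}
    {d : n → ℝ} (hL : L.IsUpperTriangular) (hdiag : ∀ i, L i i ≠ 0) (hd : ∀ i, 0 < d i) :
    (Lᵀ * diagonal d * L).PosDef := by
  have hunit : IsUnit L := by
    rw [isUnit_iff_isUnit_det, det_of_isUpperTriangular hL]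
    exact (Finset.prod_ne_zero_iff.mpr fun i _ => hdiag i).isUnit
  rw [← conjTranspose_eq_transpose_of_trivial]
  exact (PosDef.diagonal hd).conjTranspose_mul_mul_same (mulVec_injective_of_isUnit hunit)

end Matrix

noncomputable def ldlL : Matrix (Fin 9) (Fin 9) ℝ :=
  !![1, 0, 8/3, 8/3, 0, 0, 2, 0, 2;
     0, 1, 8/3, 8/3, 4/3, 2, 0, 2, 0;
     0, 0, 1, 4/49, 16/49, 6/49, 6/49, 24/49, 24/49;
     0, 0, 0, 1, 16/53, 128/265, 128/265, -26/159, 22/265;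
     0, 0, 0, 0, 1, -480/3569, 792/3569, -288/3569, 792/3569;
     0, 0, 0, 0, 0, 1, -59964/117131, 72420/117131, -2448/16733;
     0, 0, 0, 0, 0, 0, 1, 325792/485413, 90524/485413;
     0, 0, 0, 0, 0, 0, 0, 1, -4690764/3095489;
     0, 0, 0, 0, 0, 0, 0, 0, 1]

noncomputable def ldlD : Fin 9 → ℝ :=
  ![3/2, 3/2, 49/6, 795/98, 3569/318, 117131/35690, 485413/234262, 3095489/2912478,
    2162655/6190978]

set_option maxHeartbeats 4000000 in
theorem ldlL_transpose_mul_diagonal_ldlD_mul :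
    ldlLᵀ * diagonal ldlD * ldlL = matA1 + matA2 - (1 / 2 : ℝ) • 1 := by
  ext i j
  fin_cases i <;> fin_cases j <;>
    simp [mul_apply, Fin.sum_univ_succ, ldlL, ldlD, matA1, matA2] <;> norm_num

theorem posDef_matA1_add_matA2_sub_half : (matA1 + matA2 - (1 / 2 : ℝ) • 1).PosDef := by
  rw [← ldlL_transpose_mul_diagonal_ldlD_mul]
  refine posDef_transpose_mul_diagonal_mul ?_ ?_ ?_
  · intro i j hji
    fin_cases i <;> fin_cases j <;> simp_all [ldlL]
  · intro i
    fin_cases i <;> simp [ldlL]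
  · intro i
    fin_cases i <;> norm_num [ldlD]

theorem stmt9 : (matA1 + matA2).PosDef ∧
    ∀ μ : ℝ, Module.End.HasEigenvalue (Matrix.toLin' (matA1 + matA2)) μ →
      (1 : ℝ) / 2 < μ := by
  have h := posDef_matA1_add_matA2_sub_half
  exact ⟨h.of_sub_smul_one (by norm_num), fun μ hμ => h.lt_of_hasEigenvalue hμ⟩
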